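/- arXiv:1702.06171 — 2 statements merged into one kernel-verified Lean document; each statement's English description precedes it below -/
import Mathlib

section
/- Let b be a polynomial Blaschke–Potapov product of degree m on ℂⁿ and W = b·H₊ ⊆ H₊. Then the orthogonal complement W^⊥ of W in H₊ consists only of ℂⁿ-valued polynomials of degree at most m − 1; in particular W^⊥ is finite dimensional with dim W^⊥ ≤ nm. -/
open Matrix
open scoped InnerProductSpace

noncomputable def projMat {n : ℕ} (α : Submodule ℂ (EuclideanSpace ℂ (Fin n))) :
    Matrix (Fin n) (Fin n) ℂ :=
  LinearMap.toMatrix (EuclideanSpace.basisFun (Fin n) ℂ).toBasis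
    (EuclideanSpace.basisFun (Fin n) ℂ).toBasis
    ((α.subtypeL.comp α.orthogonalProjectionOnto) : _ →L[ℂ] _).toLinearMap

/-- Blaschke–Potapov factor `π_α + λ π_α^⊥`. -/
noncomputable def BPfac {n : ℕ} (α : Submodule ℂ (EuclideanSpace ℂ (Fin n))) (lam : ℂ) :
    Matrix (Fin n) (Fin n) ℂ :=
  projMat α + lam • (1 - projMat α)
/-- Polynomial Blaschke–Potapov product `∏_j (π_{α_j} + λ π_{α_j}^⊥)` (in the given order). -/
noncomputable def BPProd {n m : ℕ} (α : Fin m → Submodule ℂ (EuclideanSpace ℂ (Fin n)))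
    (lam : ℂ) : Matrix (Fin n) (Fin n) ℂ :=
  (List.ofFn fun j => BPfac (α j) lam).prod
/-- The Hardy space H₊ of ℂⁿ-valued functions on the circle, identified with the
ℓ²-space of sequences of Fourier coefficients. -/
noncomputable abbrev Hp (n : ℕ) := lp (fun _ : ℕ => EuclideanSpace ℂ (Fin n)) 2

/-- The sequence of Fourier coefficients of `b·g`, where `b` is the matrix polynomial
with coefficients `c 0, …, c m` and `g` has Fourier coefficients `g 0, g 1, …`. -/
noncomputable def mulBP {n m : ℕ} (c : Fin (m + 1) → Matrix (Fin n) (Fin n) ℂ)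
    (g : ℕ → EuclideanSpace ℂ (Fin n)) (k : ℕ) : EuclideanSpace ℂ (Fin n) :=
  ∑ j : Fin (m + 1), if (j : ℕ) ≤ k then WithLp.toLp 2 ((c j).mulVec (g ((k - j : ℕ)))) else 0

/-! Each factor `π_α + z π_α^⊥` satisfies `(π_α + z π_α^⊥)(π_α + z⁻¹ π_α^⊥) = 1`, so
`b(z) b(1/z̄)* = 1` for `z ≠ 0`; comparing coefficients, the coefficients `c_j` of `b` satisfy
`∑_{i - j = d} c_i c_j* = δ_{d,0}`. If `f ⊥ b·H₊`, testing against `b·(e zˡ)` shows that the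
Toeplitz adjoint `T_b* f`, with coefficients `∑_j c_j* f_{l+j}`, vanishes. By the coefficient
identity, `b·(T_b* f)` agrees with `f` in every degree `k ≥ m`, so `f_k = 0` there: `W^⊥` lies in
the `nm`-dimensional space of polynomials of degree `< m`. -/

lemma isStarProjection_projMat {n : ℕ} (α : Submodule ℂ (EuclideanSpace ℂ (Fin n))) :
    IsStarProjection (projMat α) :=
  isStarProjection_starProjection.map (toEuclideanCLM (𝕜 := ℂ) (n := Fin n)).symm.toStarAlgHom

lemma IsStarProjection.add_smul_one_sub_mul_star_eq_one {A : Type*} [Ring A] [StarRing A]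
    [Algebra ℂ A] [StarModule ℂ A] {p : A} (hp : IsStarProjection p) {z : ℂ} (hz : z ≠ 0) :
    (p + z • (1 - p)) * star (p + (star z)⁻¹ • (1 - p)) = 1 := by
  have hstar : star (p + (star z)⁻¹ • (1 - p)) = p + z⁻¹ • (1 - p) := by
    rw [star_add, star_smul, star_inv₀, star_star, hp.one_sub.isSelfAdjoint.star_eq,
      hp.isSelfAdjoint.star_eq]
  rw [hstar, add_mul, mul_add, mul_add, hp.isIdempotentElem.eq, mul_smul_comm,
    hp.mul_one_sub_self, smul_mul_assoc, hp.one_sub_mul_self, smul_mul_smul_comm,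
    hp.one_sub.isIdempotentElem.eq, mul_inv_cancel₀ hz, smul_zero, smul_zero, one_smul,
    add_zero, zero_add, add_sub_cancel]

lemma list_prod_ofFn_mul_star_eq_one {M : Type*} [Monoid M] [StarMul M] {m : ℕ}
    (u v : Fin m → M) (h : ∀ i, u i * star (v i) = 1) :
    (List.ofFn u).prod * star (List.ofFn v).prod = 1 := by
  induction m with
  | zero => simp
  | succ m ih =>
    rw [List.ofFn_succ, List.ofFn_succ, List.prod_cons, List.prod_cons, star_mul, mul_assoc,
      ← mul_assoc _ (star _), ih _ _ fun i => h i.succ, one_mul, h 0]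

lemma BPProd_mul_conjTranspose_BPProd_inv {n m : ℕ}
    (α : Fin m → Submodule ℂ (EuclideanSpace ℂ (Fin n))) {z : ℂ} (hz : z ≠ 0) :
    BPProd α z * (BPProd α (star z)⁻¹)ᴴ = 1 :=
  list_prod_ofFn_mul_star_eq_one _ _ fun j =>
    (isStarProjection_projMat (α j)).add_smul_one_sub_mul_star_eq_one hz

lemma sum_filter_eq_of_forall_sum_pow_smul_eq {K V ι : Type*} [Field K] [Infinite K]
    [AddCommGroup V] [Module K V] (s : Finset ι) (e : ι → ℕ) (M : ι → V) (N : ℕ) (v : V)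
    (h : ∀ z : K, z ≠ 0 → ∑ p ∈ s, z ^ e p • M p = z ^ N • v) (t : ℕ) :
    ∑ p ∈ s with e p = t, M p = if t = N then v else 0 := by
  rw [← sub_eq_zero, ← Module.forall_dual_apply_eq_zero_iff K]
  intro φ
  set P : Polynomial K :=
    ∑ p ∈ s, Polynomial.monomial (e p) (φ (M p)) - Polynomial.monomial N (φ v) with hP
  have hP0 : P = 0 := by
    refine P.eq_zero_of_infinite_isRoot (Set.Infinite.mono (fun z hz => ?_)
      (Set.finite_singleton (0 : K)).infinite_compl)
    have hφ := congrArg φ (h z hz)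
    simp only [map_sum, map_smul, smul_eq_mul] at hφ
    simp only [Set.mem_ofPred_eq, Polynomial.IsRoot, hP, Polynomial.eval_sub,
      Polynomial.eval_finsetSum, Polynomial.eval_monomial, sub_eq_zero]
    simpa only [mul_comm] using hφ
  have hcoeff := congrArg (Polynomial.coeff · t) hP0
  simp only [hP, Polynomial.coeff_sub, Polynomial.finsetSum_coeff, Polynomial.coeff_monomial,
    Polynomial.coeff_zero] at hcoeff
  rw [map_sub, map_sum, Finset.sum_filter, apply_ite φ, map_zero]
  simpa only [@eq_comm _ N t] using hcoeff

/-- Coefficient form of `b(z) b(1/z̄)* = 1`. -/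
lemma BPProd_coeff_autocorrelation {n m : ℕ} (α : Fin m → Submodule ℂ (EuclideanSpace ℂ (Fin n)))
    (c : Fin (m + 1) → Matrix (Fin n) (Fin n) ℂ)
    (hc : ∀ z : ℂ, BPProd α z = ∑ k : Fin (m + 1), z ^ (k : ℕ) • c k) (t : ℕ) :
    ∑ p : Fin (m + 1) × Fin (m + 1) with (p.1 : ℕ) + m - p.2 = t, c p.1 * (c p.2)ᴴ =
      if t = m then 1 else 0 := by
  refine sum_filter_eq_of_forall_sum_pow_smul_eq (K := ℂ) _ _ _ _ _ (fun z hz => ?_) t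
  have hconj : (BPProd α (star z)⁻¹)ᴴ = ∑ j : Fin (m + 1), z⁻¹ ^ (j : ℕ) • (c j)ᴴ := by
    simp only [hc, conjTranspose_sum, conjTranspose_smul, star_pow, star_inv₀, star_star]
  rw [← BPProd_mul_conjTranspose_BPProd_inv α hz, hconj, hc, Finset.sum_mul_sum,
    ← Finset.univ_product_univ, Finset.sum_product, Finset.smul_sum]
  refine Finset.sum_congr rfl fun i _ => ?_
  rw [Finset.smul_sum]
  refine Finset.sum_congr rfl fun j _ => ?_
  rw [smul_mul_smul_comm, smul_smul]
  congr 1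
  rw [pow_sub₀ _ hz (by omega), pow_add, inv_pow]
  ring

section Toeplitz

variable {n m : ℕ} (c : Fin (m + 1) → Matrix (Fin n) (Fin n) ℂ)

/-- Coefficients of the Toeplitz adjoint `T_b* f`, i.e. of the analytic part of `b* f`. -/
noncomputable def adjMulBP (f : ℕ → EuclideanSpace ℂ (Fin n)) (l : ℕ) :
    EuclideanSpace ℂ (Fin n) :=
  ∑ j : Fin (m + 1), toEuclideanCLM (𝕜 := ℂ) (c j)ᴴ (f (l + j))

def mulBPRange : Set (Hp n) :=
  {f | ∃ g : Hp n, ∀ k, f k = mulBP c (fun j => g j) k}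

lemma mulBP_eq_sum_toEuclideanCLM (g : ℕ → EuclideanSpace ℂ (Fin n)) (k : ℕ) :
    mulBP c g k = ∑ j : Fin (m + 1),
      if (j : ℕ) ≤ k then toEuclideanCLM (𝕜 := ℂ) (c j) (g (k - j)) else 0 :=
  rfl

lemma mulBP_adjMulBP_of_le
    (hc : ∀ t : ℕ, ∑ p : Fin (m + 1) × Fin (m + 1) with (p.1 : ℕ) + m - p.2 = t,
      c p.1 * (c p.2)ᴴ = if t = m then 1 else 0)
    (f : ℕ → EuclideanSpace ℂ (Fin n)) {k : ℕ} (hk : m ≤ k) :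
    mulBP c (adjMulBP c f) k = f k := by
  set T := toEuclideanCLM (𝕜 := ℂ) (n := Fin n)
  calc mulBP c (adjMulBP c f) k
      = ∑ p : Fin (m + 1) × Fin (m + 1),
          T (c p.1 * (c p.2)ᴴ) (f (k + m - ((p.1 : ℕ) + m - p.2))) := by
        rw [mulBP_eq_sum_toEuclideanCLM, ← Finset.univ_product_univ, Finset.sum_product]
        refine Finset.sum_congr rfl fun i _ => ?_
        rw [if_pos (by omega), adjMulBP, map_sum]
        refine Finset.sum_congr rfl fun j _ => ?_
        have hi := i.isLt
        have hj := j.isLt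
        rw [map_mul, mul_apply_eq_comp]
        dsimp only
        congr 3
        omega
    _ = ∑ t ∈ Finset.range (m + m + 1),
          T (∑ p : Fin (m + 1) × Fin (m + 1) with (p.1 : ℕ) + m - p.2 = t, c p.1 * (c p.2)ᴴ)
            (f (k + m - t)) := by
        rw [← Finset.sum_fiberwise_of_maps_to (g := fun p : Fin (m + 1) × Fin (m + 1) =>
          (p.1 : ℕ) + m - p.2) (t := Finset.range (m + m + 1)) fun p _ => by simp; omega]
        refine Finset.sum_congr rfl fun t _ => ?_
        rw [map_sum, _root_.sum_apply]
        refine Finset.sum_congr rfl fun p hp => ?_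
        rw [(Finset.mem_filter.mp hp).2]
    _ = f k := by
        rw [Finset.sum_eq_single_of_mem m (by simp) fun t _ ht => by
          rw [hc, if_neg ht, map_zero, _root_.zero_apply]]
        rw [hc, if_pos rfl, map_one, one_apply_eq_self, Nat.add_sub_cancel]

lemma mulBP_single (l : ℕ) (e : EuclideanSpace ℂ (Fin n)) :
    mulBP c (Pi.single l e) =
      ∑ j : Fin (m + 1), Pi.single (l + j) (toEuclideanCLM (𝕜 := ℂ) (c j) e) := by
  funext k
  rw [mulBP_eq_sum_toEuclideanCLM, Finset.sum_apply]
  refine Finset.sum_congr rfl fun j _ => ?_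
  simp only [Pi.single_apply]
  split_ifs <;> first | rfl | omega | exact map_zero _

lemma adjMulBP_eq_zero_of_forall_inner_eq_zero (f : Hp n)
    (hf : ∀ x ∈ mulBPRange c, ⟪f, x⟫_ℂ = 0) : adjMulBP c f = 0 := by
  funext l
  refine ext_inner_right ℂ fun e => ?_
  set x : Hp n := ∑ j : Fin (m + 1), lp.single 2 (l + j) (toEuclideanCLM (𝕜 := ℂ) (c j) e)
  have hx : x ∈ mulBPRange c := ⟨lp.single 2 l e, fun k => by
    rw [lp.coeFn_single, mulBP_single, lp.coeFn_sum]
    simp [lp.coeFn_single]⟩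
  have hfx := hf x hx
  simp only [x, inner_sum, lp.inner_single_right] at hfx
  rw [Pi.zero_apply, inner_zero_left, adjMulBP, sum_inner, ← hfx]
  refine Finset.sum_congr rfl fun j _ => ?_
  rw [← star_eq_conjTranspose, map_star, ContinuousLinearMap.star_eq_adjoint,
    ContinuousLinearMap.adjoint_inner_left]

lemma coeff_eq_zero_of_forall_inner_eq_zero
    (hc : ∀ t : ℕ, ∑ p : Fin (m + 1) × Fin (m + 1) with (p.1 : ℕ) + m - p.2 = t,
      c p.1 * (c p.2)ᴴ = if t = m then 1 else 0)
    (f : Hp n) (hf : ∀ x ∈ mulBPRange c, ⟪f, x⟫_ℂ = 0) {k : ℕ} (hk : m ≤ k) : f k = 0 := by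
  rw [← mulBP_adjMulBP_of_le c hc f hk, adjMulBP_eq_zero_of_forall_inner_eq_zero c f hf]
  simp [mulBP]

end Toeplitz

namespace Hp

variable (n m : ℕ)

def degreeLT : Submodule ℂ (Hp n) where
  carrier := {f | ∀ k, m ≤ k → f k = 0}
  add_mem' hf hg k hk := by simp [hf k hk, hg k hk]
  zero_mem' _ _ := rfl
  smul_mem' a f hf k hk := by simp [hf k hk]

noncomputable def truncate : Hp n →ₗ[ℂ] Fin m → EuclideanSpace ℂ (Fin n) :=
  LinearMap.pi fun k => lp.evalₗ _ 2 (k : ℕ)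

lemma injective_truncate_comp_subtype :
    Function.Injective ((truncate n m).comp (degreeLT n m).subtype) := by
  rw [← LinearMap.ker_eq_bot, LinearMap.ker_eq_bot']
  rintro ⟨f, hf⟩ htrunc
  ext k : 3
  by_cases hk : k < m
  · exact congrFun htrunc ⟨k, hk⟩
  · exact hf k (not_lt.mp hk)

instance : FiniteDimensional ℂ (degreeLT n m) :=
  Module.Finite.of_injective _ (injective_truncate_comp_subtype n m)

lemma finrank_degreeLT_le : Module.finrank ℂ (degreeLT n m) ≤ n * m := by
  refine (LinearMap.finrank_le_finrank_of_injective (injective_truncate_comp_subtype n m)).trans ?_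
  simp [Module.finrank_pi_fintype, mul_comm]

lemma exists_finset_card_le_span_eq_degreeLT :
    ∃ s : Finset (Hp n), s.card ≤ n * m ∧ Submodule.span ℂ (s : Set (Hp n)) = degreeLT n m := by
  have : Module.Finite ℂ (Submodule.span ℂ (degreeLT n m : Set (Hp n))) := by
    rw [Submodule.span_eq]
    infer_instance
  obtain ⟨s, -, hcard, hspan, -⟩ :=
    Submodule.exists_finset_span_eq_linearIndepOn ℂ (degreeLT n m : Set (Hp n))
  rw [Submodule.span_eq] at hcard hspan
  exact ⟨s, hcard ▸ finrank_degreeLT_le n m, hspan⟩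

end Hp

/-- The orthogonal complement of W = b·H₊ in H₊ consists of polynomials of degree at
most m − 1; in particular it has dimension at most n·m. -/
theorem stmt6 {n m : ℕ} (α : Fin m → Submodule ℂ (EuclideanSpace ℂ (Fin n)))
    (c : Fin (m + 1) → Matrix (Fin n) (Fin n) ℂ)
    (hc : ∀ lam : ℂ, BPProd α lam = ∑ k : Fin (m + 1), lam ^ (k : ℕ) • c k)
    (W : Set (Hp n))
    (hW : W = {f : Hp n | ∃ g : Hp n, ∀ k : ℕ,
      (f k : EuclideanSpace ℂ (Fin n)) = mulBP c (fun j => g j) k}) :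
    (∀ f : Hp n, (∀ g ∈ W, ⟪f, g⟫_ℂ = 0) →
      ∀ k : ℕ, m ≤ k → (f k : EuclideanSpace ℂ (Fin n)) = 0) ∧
    ∃ s : Finset (Hp n), s.card ≤ n * m ∧
      ∀ f : Hp n, (∀ g ∈ W, ⟪f, g⟫_ℂ = 0) → f ∈ Submodule.span ℂ (s : Set (Hp n)) := by
  have hdeg : ∀ f : Hp n, (∀ g ∈ W, ⟪f, g⟫_ℂ = 0) → f ∈ Hp.degreeLT n m := by
    subst hW
    exact fun f hf k hk => coeff_eq_zero_of_forall_inner_eq_zero c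
      (BPProd_coeff_autocorrelation α c hc) f hf hk
  obtain ⟨s, hcard, hspan⟩ := Hp.exists_finset_card_le_span_eq_degreeLT n m
  exact ⟨hdeg, s, hcard, fun f hf => hspan ▸ hdeg f hf⟩
end

section
/- Let p_0, …, p_l be ℂⁿ-valued polynomials with degrees d_0 ≤ d_1 ≤ … ≤ d_l, which are linearly independent and such that for every j ≥ 0 the polynomials among them of degree at most j span the space of all polynomials of degree at most j in their span. For μ ∈ ℂ define q_k^μ(λ) = μ^{d_k} p_k(λ/μ) for μ ≠ 0 (a polynomial in λ whose coefficients are polynomial in μ, so defined for all μ ∈ ℂ), and let A(μ) = (⟨q_i^μ, q_j^μ⟩_{H₊})_{0 ≤ i,j ≤ l} be the Gram matrix. Then the entries of A(μ) are polynomials in μ and \overline{μ}, and det A(0) ≠ 0. -/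
/-!
At `μ = 0` only the top coefficient survives, `q_k^0(λ) = \hat p_{k,d_k} λ^{d_k}`, so `A(0)` is the
Gram matrix of the vectors carrying the leading coefficient of `p_k` in slot `d_k`. These are
independent as soon as the leading coefficients of the `p_k` of each fixed degree `j` are: a
vanishing combination of those is a combination of the `p_k` with `d_k = j` of degree `< j`, which
by the filtration hypothesis is also a combination of the `p_k` with `d_k < j`, and linear
independence of the `p_k` forces all coefficients to vanish.
-/

open scoped InnerProductSpace

theorem linearIndepOn_leadingCoeff_degree_eq {R M ι : Type*} [Ring R] [AddCommGroup M] [Module R M]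
    {a : ι → ℕ → M} {d : ι → ℕ} (hdeg : ∀ k j, d k < j → a k j = 0)
    (hli : LinearIndependent R a)
    (hfilt : ∀ j : ℕ, ∀ v ∈ Submodule.span R (Set.range a),
      (∀ t : ℕ, j < t → v t = 0) → v ∈ Submodule.span R (a '' {k | d k ≤ j}))
    (j : ℕ) : LinearIndepOn R (fun i => a i (d i)) {i | d i = j} := by
  rw [linearIndepOn_iff]
  intro l hl hl0
  set v := Finsupp.linearCombination R a l with hv
  have hcoeff : ∀ t, j ≤ t → v t = 0 := by
    intro t ht
    have hvt : v t = l.sum fun i c => c • a i t := by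
      simp only [hv, Finsupp.linearCombination_apply, Finsupp.sum, Finset.sum_apply, Pi.smul_apply]
    have hfib : ∀ i ∈ l.support, d i = j := fun i hi => (Finsupp.mem_supported R l).mp hl hi
    rcases ht.eq_or_lt with rfl | hjt
    · rw [hvt, ← hl0, Finsupp.linearCombination_apply]
      exact Finsupp.sum_congr fun i hi => by rw [hfib i hi]
    · rw [hvt]
      exact Finset.sum_eq_zero fun i hi => by simp only [hdeg i t (hfib i hi ▸ hjt), smul_zero]
  have hv_mem : v ∈ Submodule.span R (Set.range a) :=
    Finsupp.range_linearCombination (v := a) R ▸ LinearMap.mem_range_self _ l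
  cases j with
  | zero =>
    refine hli (?_ : Finsupp.linearCombination R a l = Finsupp.linearCombination R a 0)
    rw [map_zero]
    exact funext fun t => hcoeff t t.zero_le
  | succ j =>
    obtain ⟨f, hf, hfv⟩ := (Finsupp.mem_span_image_iff_linearCombination R).mp
      (hfilt j v hv_mem fun t ht => hcoeff t ht)
    have hfl : f = l := hli hfv
    subst hfl
    refine (Submodule.disjoint_def.mp (Finsupp.disjoint_supported_supported ?_)) f hf hl
    exact Set.disjoint_left.mpr fun i (hi : d i ≤ j) (hi' : d i = j + 1) => by omega

theorem PiLp.linearIndependent_single_of_linearIndepOn_fiber {𝕜 ι η E : Type*} [Semiring 𝕜]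
    [AddCommGroup E] [Module 𝕜 E] [DecidableEq η] (p : ENNReal) (f : ι → η) (v : ι → E)
    (hv : ∀ j, LinearIndepOn 𝕜 v {i | f i = j}) :
    LinearIndependent 𝕜 fun i => PiLp.single (β := fun _ => E) p (f i) (v i) := by
  rw [← linearIndependent_equiv (Equiv.sigmaFiberEquiv f)]
  convert PiLp.linearIndependent_single p 𝕜 (fun j (i : {i // f i = j}) => v i) hv using 1
  ext ⟨j, i, rfl⟩ : 1
  rfl

def polyConjLE (N : ℕ) : AddSubmonoid (ℂ → ℂ) where
  carrier := {f | ∃ co : ℕ → ℕ → ℂ, ∀ μ, f μ = ∑ s ∈ Finset.range (N + 1),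
    ∑ t ∈ Finset.range (N + 1), co s t * μ ^ s * (starRingEnd ℂ μ) ^ t}
  zero_mem' := ⟨0, fun μ => by simp⟩
  add_mem' := by
    rintro f g ⟨cf, hf⟩ ⟨cg, hg⟩
    exact ⟨cf + cg, fun μ => by
      simp only [Pi.add_apply, hf, hg, add_mul, Finset.sum_add_distrib]⟩

theorem monomial_mem_polyConjLE {N s t : ℕ} (hs : s ≤ N) (ht : t ≤ N) (c : ℂ) :
    (fun μ : ℂ => c * μ ^ s * (starRingEnd ℂ μ) ^ t) ∈ polyConjLE N :=
  ⟨fun s' t' => if s' = s ∧ t' = t then c else 0, fun μ => by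
    simp [ite_and, Finset.mem_range, hs, ht]⟩

theorem inner_ite_pow_smul_mem_polyConjLE {E : Type*} [SeminormedAddCommGroup E]
    [InnerProductSpace ℂ E] {N e f : ℕ} (he : e ≤ N) (hf : f ≤ N) (t : ℕ) (x y : E) :
    (fun μ : ℂ => ⟪if t ≤ e then μ ^ (e - t) • x else 0,
      if t ≤ f then μ ^ (f - t) • y else 0⟫_ℂ) ∈ polyConjLE N := by
  split_ifs
  · convert monomial_mem_polyConjLE ((f.sub_le t).trans hf) ((e.sub_le t).trans he) ⟪x, y⟫_ℂ
      using 1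
    funext μ
    rw [inner_smul_left, inner_smul_right, map_pow]
    ring
  all_goals simp only [inner_zero_left, inner_zero_right]; exact zero_mem _

theorem ite_zero_pow_smul_eq {R M : Type*} [MonoidWithZero R] [Zero M]
    [MulActionWithZero R M] (a : ℕ → M) (d t : ℕ) :
    (if t ≤ d then (0 : R) ^ (d - t) • a t else 0) = if t = d then a d else 0 := by
  split_ifs with hle heq heq
  · rw [heq, Nat.sub_self, pow_zero, one_smul]
  · rw [zero_pow (by omega), zero_smul]
  · omega
  · rfl

theorem stmt12_general {n l : ℕ} (a : Fin (l + 1) → ℕ → EuclideanSpace ℂ (Fin n))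
    (d : Fin (l + 1) → ℕ)
    (hdeg : ∀ k j, d k < j → a k j = 0)
    (hli : LinearIndependent ℂ a)
    (hfilt : ∀ j : ℕ, ∀ v ∈ Submodule.span ℂ (Set.range a),
      (∀ t : ℕ, j < t → v t = 0) → v ∈ Submodule.span ℂ (a '' {k | d k ≤ j}))
    (N : ℕ) (hN : ∀ k, d k ≤ N)
    (qc : Fin (l + 1) → ℂ → ℕ → EuclideanSpace ℂ (Fin n))
    (hqc : ∀ k μ j, qc k μ j = if j ≤ d k then μ ^ (d k - j) • a k j else 0)
    (A : ℂ → Matrix (Fin (l + 1)) (Fin (l + 1)) ℂ)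
    (hA : ∀ μ i j, A μ i j = ∑ t ∈ Finset.range (N + 1), ⟪qc i μ t, qc j μ t⟫_ℂ) :
    (∀ i j, ∃ co : ℕ → ℕ → ℂ, ∀ μ : ℂ, A μ i j =
      ∑ s ∈ Finset.range (N + 1), ∑ t ∈ Finset.range (N + 1),
        co s t * μ ^ s * (starRingEnd ℂ μ) ^ t) ∧
    (A 0).det ≠ 0 := by
  refine ⟨fun i j => ?_, ?_⟩
  · have hsum := sum_mem fun t (_ : t ∈ Finset.range (N + 1)) =>
      inner_ite_pow_smul_mem_polyConjLE (hN i) (hN j) t (a i t) (a j t)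
    show (fun μ => A μ i j) ∈ polyConjLE N
    simpa only [hA, hqc, Finset.sum_fn] using hsum
  · have hgram : A 0 = Matrix.gram ℂ fun i => WithLp.toLp 2 fun t : Fin (N + 1) => qc i 0 t := by
      ext i j
      rw [hA, Matrix.gram_apply, PiLp.inner_apply, Finset.sum_range]
    have hlead : (fun i => WithLp.toLp 2 fun t : Fin (N + 1) => qc i 0 t) =
        fun i => PiLp.single 2 (⟨d i, Nat.lt_succ_of_le (hN i)⟩ : Fin (N + 1)) (a i (d i)) := by
      funext i
      rw [← PiLp.toLp_single]
      congr 1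
      funext t
      simp only [hqc, ite_zero_pow_smul_eq, Pi.single_apply, Fin.ext_iff]
    rw [hgram, Matrix.det_gram_ne_zero_iff_linearIndependent, hlead]
    exact PiLp.linearIndependent_single_of_linearIndepOn_fiber _ _ _ fun j => by
      simpa [Fin.ext_iff] using linearIndepOn_leadingCoeff_degree_eq hdeg hli hfilt j

/-- For polynomials p_0,…,p_l (given by coefficient sequences a_k of degrees d_k,
nondecreasing) which are linearly independent and such that their members of degree ≤ j
span all polynomials of degree ≤ j in their span, the Gram matrix A(μ) of the
renormalized deformations q_k^μ(λ) = μ^{d_k} p_k(λ/μ) has entries polynomial in μ and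
conj(μ), and det A(0) ≠ 0. -/
theorem stmt12 {n l : ℕ} (a : Fin (l + 1) → ℕ → EuclideanSpace ℂ (Fin n))
    (d : Fin (l + 1) → ℕ)
    (hdeg : ∀ k j, d k < j → a k j = 0)
    (hlead : ∀ k, a k (d k) ≠ 0)
    (hmono : Monotone d)
    (hli : LinearIndependent ℂ a)
    (hfilt : ∀ j : ℕ, ∀ v ∈ Submodule.span ℂ (Set.range a),
      (∀ t : ℕ, j < t → v t = 0) → v ∈ Submodule.span ℂ (a '' {k | d k ≤ j}))
    (N : ℕ) (hN : ∀ k, d k ≤ N)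
    (qc : Fin (l + 1) → ℂ → ℕ → EuclideanSpace ℂ (Fin n))
    (hqc : ∀ k μ j, qc k μ j = if j ≤ d k then μ ^ (d k - j) • a k j else 0)
    (A : ℂ → Matrix (Fin (l + 1)) (Fin (l + 1)) ℂ)
    (hA : ∀ μ i j, A μ i j = ∑ t ∈ Finset.range (N + 1), ⟪qc i μ t, qc j μ t⟫_ℂ) :
    (∀ i j, ∃ co : ℕ → ℕ → ℂ, ∀ μ : ℂ, A μ i j =
      ∑ s ∈ Finset.range (N + 1), ∑ t ∈ Finset.range (N + 1),
        co s t * μ ^ s * (starRingEnd ℂ μ) ^ t) ∧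
    (A 0).det ≠ 0 :=
  stmt12_general a d hdeg hli hfilt N hN qc hqc A hA
end
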